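/- Let G : ℝ^{d_z} → ℝ^{d_x} be differentiable at z and let φ : ℝ^{d_x} → ℝ^m be differentiable at G(z). Suppose the composition φ ∘ G is a constant function on ℝ^{d_z}, and the Fréchet derivative of φ at G(z) is surjective. Then the rank of the Fréchet derivative of G at z is at most d_x − m. In particular, if d_x − m < d_z, then rank(fderiv ℝ G z) < d_z, i.e., the Jacobian of G at z is rank-deficient. -/

import Mathlib

open Module

theorem LinearMap.finrank_range_le_sub_of_comp_eq_zero {K V W U : Type*} [DivisionRing K]
    [AddCommGroup V] [Module K V] [AddCommGroup W] [Module K W] [FiniteDimensional K W]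
    [AddCommGroup U] [Module K U] (f : V →ₗ[K] W) (g : W →ₗ[K] U)
    (hg : Function.Surjective g) (hgf : ∀ x, g (f x) = 0) :
    finrank K (range f) ≤ finrank K W - finrank K U := by
  have hker : finrank K (ker g) = finrank K W - finrank K U := by
    rw [← g.finrank_range_add_finrank_ker, range_eq_top.mpr hg, finrank_top]
    omega
  exact hker ▸ Submodule.finrank_mono (range_le_ker_iff.mpr (ext hgf))

theorem fderiv_comp_eq_zero_of_comp_eq_const {𝕜 E F G : Type*} [NontriviallyNormedField 𝕜]
    [NormedAddCommGroup E] [NormedSpace 𝕜 E] [NormedAddCommGroup F] [NormedSpace 𝕜 F]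
    [NormedAddCommGroup G] [NormedSpace 𝕜 G] {g : E → F} {f : F → G} {x : E}
    (hf : DifferentiableAt 𝕜 f (g x)) (hg : DifferentiableAt 𝕜 g x) {c : G}
    (hconst : ∀ y, f (g y) = c) :
    (fderiv 𝕜 f (g x)).comp (fderiv 𝕜 g x) = 0 := by
  rw [← fderiv_comp x hf hg, show f ∘ g = fun _ => c from funext hconst, fderiv_const_apply]

/-- **Rank deficiency from a constant submersion constraint (Theorem 1, part 2).**
Let `G : ℝ^{d_z} → ℝ^{d_x}` be differentiable at `z` and `φ : ℝ^{d_x} → ℝ^m` be differentiable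
at `G z`. If `φ ∘ G` is constant and the Fréchet derivative of `φ` at `G z` is surjective, then
the rank of the Fréchet derivative of `G` at `z` is at most `d_x - m`; in particular, if
`d_x - m < d_z` then the Jacobian of `G` at `z` is rank-deficient. -/
theorem rank_fderiv_le_of_constant_submersion (dz dx m : ℕ)
    (G : EuclideanSpace ℝ (Fin dz) → EuclideanSpace ℝ (Fin dx))
    (φ : EuclideanSpace ℝ (Fin dx) → EuclideanSpace ℝ (Fin m))
    (z : EuclideanSpace ℝ (Fin dz))
    (hG : DifferentiableAt ℝ G z) (hφ : DifferentiableAt ℝ φ (G z))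
    (c : EuclideanSpace ℝ (Fin m)) (hconst : ∀ w, φ (G w) = c)
    (hsurj : Function.Surjective (fderiv ℝ φ (G z))) :
    Module.finrank ℝ (LinearMap.range ((fderiv ℝ G z) : EuclideanSpace ℝ (Fin dz) →ₗ[ℝ] EuclideanSpace ℝ (Fin dx))) ≤ dx - m ∧
      (dx - m < dz →
        Module.finrank ℝ (LinearMap.range ((fderiv ℝ G z) : EuclideanSpace ℝ (Fin dz) →ₗ[ℝ] EuclideanSpace ℝ (Fin dx))) < dz) := by
  have hcomp := fderiv_comp_eq_zero_of_comp_eq_const hφ hG hconst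
  have hrank := LinearMap.finrank_range_le_sub_of_comp_eq_zero
    (fderiv ℝ G z : EuclideanSpace ℝ (Fin dz) →ₗ[ℝ] EuclideanSpace ℝ (Fin dx))
    (fderiv ℝ φ (G z) : EuclideanSpace ℝ (Fin dx) →ₗ[ℝ] EuclideanSpace ℝ (Fin m))
    hsurj (DFunLike.congr_fun hcomp)
  simp only [finrank_euclideanSpace_fin] at hrank
  exact ⟨hrank, hrank.trans_lt⟩
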